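/- One federated EM step does not decrease the log-likelihood: let μ_1,…,μ_M ∈ ℝ^d and let each π_c be a strictly positive probability vector on {1,…,M}. Define q_{c,i}(m) = π_c(m)·N(x_{c,i}; μ_m, I) / Σ_{m'=1}^M π_c(m')·N(x_{c,i}; μ_{m'}, I), then π'_c(m) = (1/N_c)·Σ_{i=1}^{N_c} q_{c,i}(m) and μ'_m = (Σ_{c=1}^C Σ_{i=1}^{N_c} q_{c,i}(m)·x_{c,i}) / (Σ_{c=1}^C Σ_{i=1}^{N_c} q_{c,i}(m)) (the denominators are strictly positive). Then F(μ'_{1:M}, π'_{1:C}) ≥ F(μ_{1:M}, π_{1:C}). -/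

import Mathlib

/-!
For every family of positive probability vectors `q_{c,i}` the surrogate `G(μ, π; q)` is a lower
bound of `F(μ, π)` (Jensen's inequality for the concave `log`), with equality when `q` is the
posterior. With `q` fixed, the M-step does not decrease `G`: the averaged responsibilities maximise
`Σ q log π` by Gibbs' inequality, and each weighted centroid minimises the weighted sum of squared
distances. Hence `F(μ, π) = G(μ, π; q) ≤ G(μ', π'; q) ≤ F(μ', π')`.
-/

/-- Identity-covariance Gaussian density on `ℝ^d`:
`N(x; μ, I) = (2π)^(-d/2) · exp(-‖x-μ‖²/2)`. -/
noncomputable def gaussI (d : ℕ) (x μ : EuclideanSpace ℝ (Fin d)) : ℝ :=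
  (2 * Real.pi) ^ (-(d : ℝ) / 2) * Real.exp (-‖x - μ‖ ^ 2 / 2)

/-- Log-likelihood of the identity-covariance Gaussian mixture across all clients:
`F(μ_{1:M}, π_{1:C}) = Σ_c Σ_i log(Σ_m π_c(m) N(x_{c,i}; μ_m, I))`. -/
noncomputable def logLik (d C M : ℕ) (N : Fin C → ℕ)
    (x : (c : Fin C) → Fin (N c) → EuclideanSpace ℝ (Fin d))
    (μ : Fin M → EuclideanSpace ℝ (Fin d))
    (π : Fin C → Fin M → ℝ) : ℝ :=
  ∑ c, ∑ i, Real.log (∑ m, π c m * gaussI d (x c i) (μ m))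

/-- The EM surrogate function
`G(μ_{1:M}, π_{1:C}; q) = Σ_c Σ_i Σ_m q_{c,i}(m)·[log π_c(m) − (d/2)·log(2π)
  − ‖x_{c,i} − μ_m‖²/2 − log q_{c,i}(m)]`. -/
noncomputable def surrogate (d C M : ℕ) (N : Fin C → ℕ)
    (x : (c : Fin C) → Fin (N c) → EuclideanSpace ℝ (Fin d))
    (μ : Fin M → EuclideanSpace ℝ (Fin d))
    (π : Fin C → Fin M → ℝ)
    (q : (c : Fin C) → Fin (N c) → Fin M → ℝ) : ℝ :=
  ∑ c, ∑ i, ∑ m, q c i m *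
    (Real.log (π c m) - (d : ℝ) / 2 * Real.log (2 * Real.pi)
      - ‖x c i - μ m‖ ^ 2 / 2 - Real.log (q c i m))

open Finset
open Real (log)

theorem sum_mul_log_sub_log_le_log_sum {ι : Type*} [Fintype ι] {q a : ι → ℝ}
    (hq : ∀ i, 0 < q i) (ha : ∀ i, 0 < a i) (hq₁ : ∑ i, q i = 1) :
    ∑ i, q i * (log (a i) - log (q i)) ≤ log (∑ i, a i) := by
  have jensen := strictConcaveOn_log_Ioi.concaveOn.le_map_sum (t := univ) (w := q)
    (p := fun i ↦ a i / q i) (fun i _ ↦ (hq i).le) hq₁ (fun i _ ↦ div_pos (ha i) (hq i))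
  simp only [smul_eq_mul, mul_div_cancel₀ _ (hq _).ne'] at jensen
  calc ∑ i, q i * (log (a i) - log (q i)) = ∑ i, q i * log (a i / q i) :=
        sum_congr rfl fun i _ ↦ by rw [Real.log_div (ha i).ne' (hq i).ne']
    _ ≤ log (∑ i, a i) := jensen

theorem sum_mul_log_sub_log_eq_log_sum {ι : Type*} [Fintype ι] {q a : ι → ℝ}
    (ha : ∀ i, 0 < a i) (hq : ∀ i, q i = a i / ∑ j, a j) :
    ∑ i, q i * (log (a i) - log (q i)) = log (∑ i, a i) := by
  rcases isEmpty_or_nonempty ι with hι | hι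
  · simp
  have hS : 0 < ∑ j, a j := sum_pos (fun i _ ↦ ha i) univ_nonempty
  have hlog : ∀ i, log (a i) - log (q i) = log (∑ j, a j) := fun i ↦ by
    rw [hq, Real.log_div (ha i).ne' hS.ne']
    ring
  rw [sum_congr rfl fun i _ ↦ congrArg (q i * ·) (hlog i), ← sum_mul]
  simp only [hq, ← sum_div, div_self hS.ne', one_mul]

theorem sum_mul_log_le_sum_mul_log {ι : Type*} [Fintype ι] {p r : ι → ℝ}
    (hp : ∀ i, 0 < p i) (hr : ∀ i, 0 < r i) (hp₁ : ∑ i, p i = 1) (hr₁ : ∑ i, r i = 1) :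
    ∑ i, p i * log (r i) ≤ ∑ i, p i * log (p i) := by
  have gibbs := sum_mul_log_sub_log_le_log_sum hp hr hp₁
  rw [hr₁, Real.log_one] at gibbs
  simp only [mul_sub, sum_sub_distrib] at gibbs
  linarith

theorem sum_sum_mul_log_le_sum_sum_mul_log {ι κ : Type*} [Fintype ι] [Fintype κ]
    {w : ι → κ → ℝ} {p r : κ → ℝ} {n : ℝ} (hn : 0 ≤ n) (hw : ∀ k, ∑ i, w i k = n * p k)
    (hp : ∀ k, 0 < p k) (hr : ∀ k, 0 < r k) (hp₁ : ∑ k, p k = 1) (hr₁ : ∑ k, r k = 1) :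
    ∑ i, ∑ k, w i k * log (r k) ≤ ∑ i, ∑ k, w i k * log (p k) := by
  simp only [sum_comm (s := (univ : Finset ι)), ← sum_mul, hw, mul_assoc, ← mul_sum]
  exact mul_le_mul_of_nonneg_left (sum_mul_log_le_sum_mul_log hp hr hp₁ hr₁) hn

theorem Finset.sum_mul_norm_sub_centerMass_sq_le {ι E : Type*} [NormedAddCommGroup E]
    [InnerProductSpace ℝ E] {s : Finset ι} {w : ι → ℝ} (hw : ∀ i ∈ s, 0 ≤ w i)
    (hW : ∑ i ∈ s, w i ≠ 0) (x : ι → E) (b : E) :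
    ∑ i ∈ s, w i * ‖x i - s.centerMass w x‖ ^ 2 ≤ ∑ i ∈ s, w i * ‖x i - b‖ ^ 2 := by
  set c := s.centerMass w x
  have hc : ∑ i ∈ s, w i • (x i - c) = 0 := by
    simp only [smul_sub, sum_sub_distrib, ← sum_smul, c, centerMass, smul_inv_smul₀ hW,
      sub_self]
  -- The cross terms vanish because `c` is the weighted mean of the `x i`.
  have expand : ∀ i, w i * ‖x i - b‖ ^ 2
      = w i * ‖x i - c‖ ^ 2 + 2 * inner ℝ (w i • (x i - c)) (c - b) + w i * ‖c - b‖ ^ 2 :=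
    fun i ↦ by
      rw [← sub_add_sub_cancel (x i) c b, norm_add_sq_real, real_inner_smul_left]
      ring
  rw [sum_congr rfl fun i _ ↦ expand i, sum_add_distrib, sum_add_distrib, ← mul_sum,
    ← sum_inner, hc, inner_zero_left, ← sum_mul]
  have := mul_nonneg (sum_nonneg hw) (sq_nonneg ‖c - b‖)
  linarith

theorem sum_sum_mul_norm_sub_weightedMean_sq_le {κ : Type*} {ι : κ → Type*} [Fintype κ]
    [∀ k, Fintype (ι k)] {E : Type*} [NormedAddCommGroup E] [InnerProductSpace ℝ E]
    {w : (k : κ) → ι k → ℝ} (hw : ∀ k i, 0 ≤ w k i) (hW : ∑ k, ∑ i, w k i ≠ 0)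
    (x : (k : κ) → ι k → E) (b : E) :
    ∑ k, ∑ i, w k i * ‖x k i - (∑ k, ∑ i, w k i)⁻¹ • ∑ k, ∑ i, w k i • x k i‖ ^ 2
      ≤ ∑ k, ∑ i, w k i * ‖x k i - b‖ ^ 2 := by
  have := (univ : Finset (Sigma ι)).sum_mul_norm_sub_centerMass_sq_le (w := fun p ↦ w p.1 p.2)
    (fun p _ ↦ hw p.1 p.2) (by rwa [Fintype.sum_sigma']) (fun p ↦ x p.1 p.2) b
  simpa only [centerMass, Fintype.sum_sigma] using this

theorem gaussI_pos (d : ℕ) (x μ : EuclideanSpace ℝ (Fin d)) : 0 < gaussI d x μ := by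
  unfold gaussI
  positivity

theorem log_gaussI (d : ℕ) (x μ : EuclideanSpace ℝ (Fin d)) :
    log (gaussI d x μ) = -(d : ℝ) / 2 * log (2 * Real.pi) - ‖x - μ‖ ^ 2 / 2 := by
  have h2π : 0 < 2 * Real.pi := by positivity
  rw [gaussI, Real.log_mul (Real.rpow_pos_of_pos h2π _).ne' (Real.exp_pos _).ne', Real.log_rpow h2π, Real.log_exp]
  ring

section EMStep

variable {d C M : ℕ} {N : Fin C → ℕ} {x : (c : Fin C) → Fin (N c) → EuclideanSpace ℝ (Fin d)}
  {μ μ' : Fin M → EuclideanSpace ℝ (Fin d)} {π π' : Fin C → Fin M → ℝ}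
  {q : (c : Fin C) → Fin (N c) → Fin M → ℝ}

theorem surrogate_eq_sum_mul_log_sub_log (hπ : ∀ c m, 0 < π c m) :
    surrogate d C M N x μ π q
      = ∑ c, ∑ i, ∑ m, q c i m * (log (π c m * gaussI d (x c i) (μ m)) - log (q c i m)) := by
  unfold surrogate
  refine sum_congr rfl fun c _ ↦ sum_congr rfl fun i _ ↦ sum_congr rfl fun m _ ↦ ?_
  rw [Real.log_mul (hπ c m).ne' (gaussI_pos _ _ _).ne', log_gaussI]
  ring

theorem logLik_eq_surrogate (hπ : ∀ c m, 0 < π c m)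
    (hq : ∀ c i m, q c i m
      = π c m * gaussI d (x c i) (μ m) / ∑ m', π c m' * gaussI d (x c i) (μ m')) :
    logLik d C M N x μ π = surrogate d C M N x μ π q := by
  rw [surrogate_eq_sum_mul_log_sub_log hπ, logLik]
  exact sum_congr rfl fun c _ ↦ sum_congr rfl fun i _ ↦ (sum_mul_log_sub_log_eq_log_sum
    (fun m ↦ mul_pos (hπ c m) (gaussI_pos _ _ _)) (hq c i)).symm

theorem surrogate_le_logLik (hπ : ∀ c m, 0 < π c m) (hq : ∀ c i m, 0 < q c i m)
    (hq₁ : ∀ c i, ∑ m, q c i m = 1) :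
    surrogate d C M N x μ π q ≤ logLik d C M N x μ π := by
  rw [surrogate_eq_sum_mul_log_sub_log hπ, logLik]
  exact sum_le_sum fun c _ ↦ sum_le_sum fun i _ ↦ sum_mul_log_sub_log_le_log_sum (hq c i)
    (fun m ↦ mul_pos (hπ c m) (gaussI_pos _ _ _)) (hq₁ c i)

theorem surrogate_sub_surrogate :
    surrogate d C M N x μ' π' q - surrogate d C M N x μ π q
      = ∑ c, ∑ i, ∑ m, q c i m * (log (π' c m) - log (π c m))
        + ∑ c, ∑ i, ∑ m, q c i m * (‖x c i - μ m‖ ^ 2 - ‖x c i - μ' m‖ ^ 2) / 2 := by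
  simp only [surrogate, ← sum_sub_distrib, ← sum_add_distrib]
  refine sum_congr rfl fun c _ ↦ sum_congr rfl fun i _ ↦ sum_congr rfl fun m _ ↦ ?_
  ring

theorem surrogate_le_surrogate
    (hπ : ∀ c, ∑ i, ∑ m, q c i m * log (π c m) ≤ ∑ i, ∑ m, q c i m * log (π' c m))
    (hμ : ∀ m, ∑ c, ∑ i, q c i m * ‖x c i - μ' m‖ ^ 2 ≤ ∑ c, ∑ i, q c i m * ‖x c i - μ m‖ ^ 2) :
    surrogate d C M N x μ π q ≤ surrogate d C M N x μ' π' q := by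
  rw [← sub_nonneg, surrogate_sub_surrogate]
  refine add_nonneg (sum_nonneg fun c _ ↦ ?_) ?_
  · simpa only [mul_sub, sum_sub_distrib, sub_nonneg] using hπ c
  · rw [sum_congr rfl fun c _ ↦ sum_comm, sum_comm]
    refine sum_nonneg fun m _ ↦ ?_
    simp only [← sum_div, mul_sub, sum_sub_distrib]
    exact div_nonneg (sub_nonneg.2 (hμ m)) zero_le_two

end EMStep

theorem em_step_logLik_nondecreasing_general
    (d C M : ℕ)
    (N : Fin C → ℕ) (hN : ∀ c, 1 ≤ N c)
    (x : (c : Fin C) → Fin (N c) → EuclideanSpace ℝ (Fin d))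
    (μ : Fin M → EuclideanSpace ℝ (Fin d))
    (π : Fin C → Fin M → ℝ)
    (hπpos : ∀ c m, 0 < π c m) (hπsum : ∀ c, ∑ m, π c m = 1)
    (q : (c : Fin C) → Fin (N c) → Fin M → ℝ)
    (hq : ∀ c i m, q c i m
      = π c m * gaussI d (x c i) (μ m) / ∑ m', π c m' * gaussI d (x c i) (μ m'))
    (π' : Fin C → Fin M → ℝ)
    (hπ' : ∀ c m, π' c m = ((N c : ℝ))⁻¹ * ∑ i, q c i m)
    (μ' : Fin M → EuclideanSpace ℝ (Fin d))
    (hμ' : ∀ m, μ' m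
      = (∑ c, ∑ i, q c i m)⁻¹ • ∑ c, ∑ i, q c i m • x c i)
    (hden : ∀ m, 0 < ∑ c, ∑ i, q c i m) :
    logLik d C M N x μ π ≤ logLik d C M N x μ' π' := by
  have hS : ∀ c i, 0 < ∑ m', π c m' * gaussI d (x c i) (μ m') := fun c i ↦
    sum_pos (fun m _ ↦ mul_pos (hπpos c m) (gaussI_pos _ _ _))
      (nonempty_of_sum_ne_zero (by rw [hπsum c]; exact one_ne_zero))
  have hqpos : ∀ c i m, 0 < q c i m := fun c i m ↦ by
    rw [hq]
    exact div_pos (mul_pos (hπpos c m) (gaussI_pos _ _ _)) (hS c i)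
  have hq₁ : ∀ c i, ∑ m, q c i m = 1 := fun c i ↦ by
    simp only [hq, ← sum_div, div_self (hS c i).ne']
  have hNpos : ∀ c, (0 : ℝ) < N c := fun c ↦ by exact_mod_cast hN c
  have hqπ' : ∀ c m, ∑ i, q c i m = N c * π' c m := fun c m ↦ by
    rw [hπ', mul_inv_cancel_left₀ (hNpos c).ne']
  have hπ'pos : ∀ c m, 0 < π' c m := fun c m ↦ by
    rw [hπ']
    exact mul_pos (inv_pos.2 (hNpos c)) (sum_pos (fun i _ ↦ hqpos c i m) ⟨⟨0, hN c⟩, mem_univ _⟩)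
  have hπ'₁ : ∀ c, ∑ m, π' c m = 1 := fun c ↦ by
    simp only [hπ', ← mul_sum]
    rw [sum_comm]
    simp [hq₁, (hNpos c).ne']
  calc logLik d C M N x μ π = surrogate d C M N x μ π q := logLik_eq_surrogate hπpos hq
    _ ≤ surrogate d C M N x μ' π' q := surrogate_le_surrogate
        (fun c ↦ sum_sum_mul_log_le_sum_sum_mul_log (hNpos c).le (hqπ' c) (hπ'pos c) (hπpos c)
          (hπ'₁ c) (hπsum c))
        (fun m ↦ hμ' m ▸ sum_sum_mul_norm_sub_weightedMean_sq_le (fun c i ↦ (hqpos c i m).le)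
          (hden m).ne' x (μ m))
    _ ≤ logLik d C M N x μ' π' := surrogate_le_logLik hπ'pos hqpos hq₁

/-- One federated EM step does not decrease the log-likelihood. -/
theorem em_step_logLik_nondecreasing
    (d C M : ℕ) (hC : 1 ≤ C) (hM : 1 ≤ M)
    (N : Fin C → ℕ) (hN : ∀ c, 1 ≤ N c)
    (x : (c : Fin C) → Fin (N c) → EuclideanSpace ℝ (Fin d))
    (μ : Fin M → EuclideanSpace ℝ (Fin d))
    (π : Fin C → Fin M → ℝ)
    (hπpos : ∀ c m, 0 < π c m) (hπsum : ∀ c, ∑ m, π c m = 1)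
    (q : (c : Fin C) → Fin (N c) → Fin M → ℝ)
    (hq : ∀ c i m, q c i m
      = π c m * gaussI d (x c i) (μ m) / ∑ m', π c m' * gaussI d (x c i) (μ m'))
    (π' : Fin C → Fin M → ℝ)
    (hπ' : ∀ c m, π' c m = ((N c : ℝ))⁻¹ * ∑ i, q c i m)
    (μ' : Fin M → EuclideanSpace ℝ (Fin d))
    (hμ' : ∀ m, μ' m
      = (∑ c, ∑ i, q c i m)⁻¹ • ∑ c, ∑ i, q c i m • x c i)
    (hden : ∀ m, 0 < ∑ c, ∑ i, q c i m) :
    logLik d C M N x μ π ≤ logLik d C M N x μ' π' :=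
  em_step_logLik_nondecreasing_general d C M N hN x μ π hπpos hπsum q hq π' hπ' μ' hμ' hden
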